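/- arXiv:2106.04486 — 3 statements merged into one kernel-verified Lean document; each statement's English description precedes it below -/
import Mathlib

section
/- Let M be a matrix with nonnegative real entries indexed by finite sets, and let (S*, T*) be nonempty index subsets maximizing the density D(M, S, T) = (Σ_{s∈S} Σ_{t∈T} M[s][t]) / sqrt(|S|·|T|). Then for every u ∈ S*, the row sum R(M, u, T*) = Σ_{t∈T*} M[u][t] satisfies R(M, u, T*) ≥ E · (1 - sqrt(1 - 1/|S*|)), where E = Σ_{s∈S*} Σ_{t∈T*} M[s][t]. -/
/-- Density of a submatrix `(S, T)` of `M`. -/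
noncomputable def density {I J : Type*} (M : I → J → ℝ) (S : Finset I) (T : Finset J) : ℝ :=
    (∑ s ∈ S, ∑ t ∈ T, M s t) / Real.sqrt ((S.card : ℝ) * T.card)

theorem stmt_3 {I J : Type*} [Fintype I] [Fintype J] (M : I → J → ℝ)
    (hM : ∀ i j, 0 ≤ M i j)
    (Sstar : Finset I) (Tstar : Finset J)
    (hS : Sstar.Nonempty) (hT : Tstar.Nonempty)
    (hopt : ∀ (S : Finset I) (T : Finset J), S.Nonempty → T.Nonempty →
      density M S T ≤ density M Sstar Tstar)
    (u : I) (hu : u ∈ Sstar) :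
    (∑ t ∈ Tstar, M u t) ≥
      (∑ s ∈ Sstar, ∑ t ∈ Tstar, M s t) *
        (1 - Real.sqrt (1 - 1 / (Sstar.card : ℝ))) := by
  classical
  set E := ∑ s ∈ Sstar, ∑ t ∈ Tstar, M s t with hE
  set R := ∑ t ∈ Tstar, M u t with hR
  have hk1 : 1 ≤ Sstar.card := Finset.card_pos.mpr hS
  rcases eq_or_lt_of_le hk1 with hk | hk
  · -- |S*| = 1, so Sstar = {u}
    obtain ⟨a, ha⟩ := Finset.card_eq_one.mp hk.symm
    have hau : a = u := by
      have := hu; rw [ha, Finset.mem_singleton] at this; exact this.symm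
    have hER : E = R := by rw [hE, hR, ha, hau, Finset.sum_singleton]
    have hc : (Sstar.card : ℝ) = 1 := by rw [ha]; simp
    rw [hc, hER]
    norm_num
  · -- |S*| ≥ 2
    have hk0 : (0:ℝ) < Sstar.card := by positivity
    have hm0 : (0:ℝ) < Tstar.card := by exact_mod_cast Finset.card_pos.mpr hT
    set S' := Sstar.erase u with hS'
    have hS'card : (S'.card : ℝ) = (Sstar.card : ℝ) - 1 := by
      rw [hS', Finset.card_erase_of_mem hu]
      have : 1 ≤ Sstar.card := hk1
      push_cast [Nat.cast_sub this]
      ring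
    have hS'ne : S'.Nonempty := by
      rw [← Finset.card_pos, hS', Finset.card_erase_of_mem hu]
      omega
    have hsum : ∑ s ∈ S', ∑ t ∈ Tstar, M s t = E - R := by
      rw [hS', hE, hR, Finset.sum_erase_eq_sub hu]
    have h := hopt S' Tstar hS'ne hT
    unfold density at h
    rw [hsum, hS'card] at h
    set k : ℝ := (Sstar.card : ℝ) with hkdef
    have hk2 : (2:ℝ) ≤ k := by rw [hkdef]; have : 2 ≤ Sstar.card := hk; exact_mod_cast this
    have hB : (0:ℝ) < Real.sqrt (k * Tstar.card) := Real.sqrt_pos.mpr (by positivity)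
    have hA : (0:ℝ) < Real.sqrt ((k - 1) * Tstar.card) :=
      Real.sqrt_pos.mpr (by nlinarith)
    -- sqrt((k-1)m) = sqrt(km) * sqrt(1 - 1/k)
    have hfac : Real.sqrt ((k - 1) * Tstar.card)
        = Real.sqrt (k * Tstar.card) * Real.sqrt (1 - 1/k) := by
      rw [← Real.sqrt_mul (by positivity)]
      congr 1
      field_simp
    have hs01 : 0 ≤ Real.sqrt (1 - 1/k) := Real.sqrt_nonneg _
    have hE0 : 0 ≤ E := Finset.sum_nonneg fun s _ => Finset.sum_nonneg fun t _ => hM s t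
    -- from h : (E - R)/A ≤ E/B, get E - R ≤ E * sqrt(1-1/k)
    have key : E - R ≤ E * Real.sqrt (1 - 1/k) := by
      have h' : (E - R) ≤ (E / Real.sqrt (k * Tstar.card)) *
          Real.sqrt ((k - 1) * Tstar.card) := by
        rw [div_le_div_iff₀ hA hB] at h
        calc E - R = (E - R) := rfl
        _ ≤ _ := by
          rw [div_mul_eq_mul_div, le_div_iff₀ hB]
          linarith [h]
      rw [hfac] at h'
      calc E - R ≤ (E / Real.sqrt (k * Tstar.card)) *
            (Real.sqrt (k * Tstar.card) * Real.sqrt (1 - 1/k)) := h'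
      _ = E * Real.sqrt (1 - 1/k) := by
          field_simp
    nlinarith [key]
end

section
/- Let M be a matrix with nonnegative real entries, and let (S*, T*) be a densest submatrix with |S*| ≥ 2. For any u ∈ S*, if the row sum R(M, u, T*) < E·(1 - sqrt(1 - 1/|S*|)) where E is the total sum of entries of the submatrix (S*, T*), then the density of the submatrix (S* \ {u}, T*) is strictly greater than the density of (S*, T*), a contradiction to optimality. -/
theorem stmt_4 {I J : Type*} [Fintype I] [Fintype J] [DecidableEq I] (M : I → J → ℝ)
    (hM : ∀ i j, 0 ≤ M i j)
    (Sstar : Finset I) (Tstar : Finset J)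
    (hS : 2 ≤ Sstar.card) (hT : Tstar.Nonempty)
    (hopt : ∀ (S : Finset I) (T : Finset J), S.Nonempty → T.Nonempty →
      density M S T ≤ density M Sstar Tstar)
    (u : I) (hu : u ∈ Sstar)
    (hrow : (∑ t ∈ Tstar, M u t) <
      (∑ s ∈ Sstar, ∑ t ∈ Tstar, M s t) *
        (1 - Real.sqrt (1 - 1 / (Sstar.card : ℝ)))) :
    density M (Sstar.erase u) Tstar > density M Sstar Tstar := by
  set E := ∑ s ∈ Sstar, ∑ t ∈ Tstar, M s t with hE
  set R := ∑ t ∈ Tstar, M u t with hR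
  set n := (Sstar.card : ℝ) with hn
  set m := (Tstar.card : ℝ) with hm
  have hn2 : (2:ℝ) ≤ n := by rw [hn]; exact_mod_cast hS
  have hm1 : (1:ℝ) ≤ m := by rw [hm]; exact_mod_cast hT.card_pos
  have hnpos : 0 < n := by linarith
  have hn1pos : 0 < n - 1 := by linarith
  have hmpos : 0 < m := by linarith
  have hR0 : 0 ≤ R := Finset.sum_nonneg fun t _ => hM u t
  have hfrac : (1:ℝ) - 1/n = (n-1)/n := by field_simp
  have hsqle : Real.sqrt (1 - 1/n) ≤ 1 :=
    Real.sqrt_le_one.mpr (by nlinarith [one_div_pos.mpr hnpos])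
  have hEpos : 0 < E := by
    by_contra h
    push_neg at h
    have : E * (1 - Real.sqrt (1 - 1/n)) ≤ 0 :=
      mul_nonpos_of_nonpos_of_nonneg h (by linarith)
    linarith
  -- sum over erase
  have hsum : ∑ s ∈ Sstar.erase u, ∑ t ∈ Tstar, M s t = E - R := by
    rw [hE, ← Finset.add_sum_erase _ _ hu]; ring
  have hcard : ((Sstar.erase u).card : ℝ) = n - 1 := by
    rw [Finset.card_erase_of_mem hu]
    have : 1 ≤ Sstar.card := by omega
    push_cast [this]
    ring
  have hdenpos : 0 < Real.sqrt ((n-1) * m) :=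
    Real.sqrt_pos.mpr (by positivity)
  have hdenpos' : 0 < Real.sqrt (n * m) :=
    Real.sqrt_pos.mpr (by positivity)
  have hkey : E - R > E * Real.sqrt (1 - 1/n) := by nlinarith
  have heq : E / Real.sqrt (n * m) = E * Real.sqrt (1 - 1/n) / Real.sqrt ((n-1) * m) := by
    rw [hfrac, Real.sqrt_div hn1pos.le, Real.sqrt_mul hn1pos.le, Real.sqrt_mul hnpos.le]
    have h1 : Real.sqrt (n-1) ≠ 0 := by positivity
    have h2 : Real.sqrt n ≠ 0 := by positivity
    have h3 : Real.sqrt m ≠ 0 := by positivity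
    field_simp
  unfold density
  rw [hsum, hcard, ← hE, ← hn, ← hm, heq]
  exact (div_lt_div_iff_of_pos_right hdenpos).mpr hkey
end

section
/- Let M be a nonnegative matrix and (S*, T*) a densest submatrix with density d_opt and entry sum E = d_opt · sqrt(|S*|·|T*|). Then every row u ∈ S* satisfies R(M, u, T*) ≥ τ_{S*} and every column v ∈ T* satisfies C(M, S*, v) ≥ τ_{T*}, where τ_{S*} = E(1 − sqrt(1 − 1/|S*|)) and τ_{T*} = E(1 − sqrt(1 − 1/|T*|)); consequently sqrt(τ_{S*}·τ_{T*}) ≥ d_opt/2. -/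
/-!
Removing a row `u` from a densest submatrix `(S, T)` cannot increase the density. With
`s = |S|`, `t = |T|` and entry sum `E`, this reads `(E - R u) / √((s - 1) t) ≤ E / √(s t)`, i.e.
`R u ≥ E (1 - √(1 - 1/s)) =: τ_S`; columns are rows of the transposed matrix. The elementary
bound `√(1 - 1/s) ≤ 1 - 1/(2s)` gives `τ_S ≥ E / (2s)`, and then
`τ_S τ_T ≥ E² / (4 s t) = (density / 2)²`.
-/

/-- The paper's `τ_S`, with `E` the entry sum of the submatrix and `n = |S|`. -/
noncomputable def peelingThreshold (E : ℝ) (n : ℕ) : ℝ :=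
  E * (1 - √(1 - 1 / (n : ℝ)))

lemma div_two_mul_le_peelingThreshold {E : ℝ} (hE : 0 ≤ E) {n : ℕ} (hn : 1 ≤ n) :
    E / (2 * n) ≤ peelingThreshold E n := by
  have hn' : (1 : ℝ) ≤ n := by exact_mod_cast hn
  have hsqrt : √(1 - 1 / (n : ℝ)) ≤ 1 - 1 / (2 * n) := by
    rw [Real.sqrt_le_left]
    · field_simp
      nlinarith
    · rw [sub_nonneg, div_le_one (by positivity)]
      linarith
  calc E / (2 * n) = E * (1 / (2 * n)) := by ring
    _ ≤ peelingThreshold E n := by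
      unfold peelingThreshold
      gcongr
      linarith

lemma le_mul_sqrt_one_sub_inv_of_div_sqrt_le {a E s t : ℝ} (hs : 1 < s) (ht : 0 < t)
    (h : a / √((s - 1) * t) ≤ E / √(s * t)) : a ≤ E * √(1 - 1 / s) := by
  have hs0 : 0 < s := by linarith
  rw [div_le_iff₀ (Real.sqrt_pos.mpr (by nlinarith))] at h
  calc a ≤ E / √(s * t) * √((s - 1) * t) := h
    _ = E * √(((s - 1) * t) / (s * t)) := by
      rw [Real.sqrt_div' _ (by positivity)]
      ring
    _ = E * √(1 - 1 / s) := by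
      congr 2
      field_simp

lemma density_swap {I J : Type*} (M : I → J → ℝ) (S : Finset I) (T : Finset J) :
    density (Function.swap M) T S = density M S T := by
  rw [density, density, Finset.sum_comm, mul_comm (T.card : ℝ)]

lemma density_sq {I J : Type*} (M : I → J → ℝ) (S : Finset I) (T : Finset J) :
    density M S T ^ 2 = (∑ s ∈ S, ∑ t ∈ T, M s t) ^ 2 / (S.card * T.card) := by
  rw [density, div_pow, Real.sq_sqrt (by positivity)]

lemma peelingThreshold_le_sum_row {I J : Type*} [DecidableEq I] {M : I → J → ℝ}
    {S : Finset I} {T : Finset J} (hT : T.Nonempty)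
    (hopt : ∀ S' : Finset I, S'.Nonempty → density M S' T ≤ density M S T)
    {u : I} (hu : u ∈ S) :
    peelingThreshold (∑ s ∈ S, ∑ t ∈ T, M s t) S.card ≤ ∑ t ∈ T, M u t := by
  obtain hS1 | hS2 := le_or_gt S.card 1
  · have hcard : S.card = 1 := le_antisymm hS1 (Finset.card_pos.mpr ⟨u, hu⟩)
    have hsum : ∑ s ∈ S, ∑ t ∈ T, M s t = ∑ t ∈ T, M u t :=
      Finset.sum_eq_single_of_mem u hu fun v hv hvu =>
        absurd (Finset.card_le_one_iff.mp hS1 hv hu) hvu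
    simp [peelingThreshold, hcard, hsum]
  · have hS' : (S.erase u).Nonempty := by
      rw [← Finset.card_pos, Finset.card_erase_of_mem hu]
      omega
    have h := hopt (S.erase u) hS'
    rw [density, density, Finset.sum_erase_eq_sub hu, Finset.card_erase_of_mem hu,
      Nat.cast_pred (by omega)] at h
    have := le_mul_sqrt_one_sub_inv_of_div_sqrt_le (by exact_mod_cast hS2)
      (by exact_mod_cast hT.card_pos) h
    unfold peelingThreshold
    linarith

theorem stmt_17_general {I J : Type*} (M : I → J → ℝ)
    (hM : ∀ i j, 0 ≤ M i j)
    (Sstar : Finset I) (Tstar : Finset J)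
    (hS : Sstar.Nonempty) (hT : Tstar.Nonempty)
    (hopt : ∀ (S : Finset I) (T : Finset J), S.Nonempty → T.Nonempty →
      density M S T ≤ density M Sstar Tstar)
    (E τS τT : ℝ)
    (hE : E = ∑ s ∈ Sstar, ∑ t ∈ Tstar, M s t)
    (hτS : τS = E * (1 - Real.sqrt (1 - 1 / (Sstar.card : ℝ))))
    (hτT : τT = E * (1 - Real.sqrt (1 - 1 / (Tstar.card : ℝ)))) :
    (∀ u ∈ Sstar, (∑ t ∈ Tstar, M u t) ≥ τS) ∧
    (∀ v ∈ Tstar, (∑ s ∈ Sstar, M s v) ≥ τT) ∧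
    Real.sqrt (τS * τT) ≥ density M Sstar Tstar / 2 := by
  classical
  change τS = peelingThreshold E Sstar.card at hτS
  change τT = peelingThreshold E Tstar.card at hτT
  have hrow : ∀ u ∈ Sstar, (∑ t ∈ Tstar, M u t) ≥ τS := fun u hu => by
    rw [hτS, hE]
    exact peelingThreshold_le_sum_row hT (fun S' hS' => hopt S' Tstar hS' hT) hu
  have hcol : ∀ v ∈ Tstar, (∑ s ∈ Sstar, M s v) ≥ τT := fun v hv => by
    rw [hτT, hE, Finset.sum_comm]
    refine peelingThreshold_le_sum_row (M := Function.swap M) hS (fun T' hT' => ?_) hv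
    have h := hopt Sstar T' hS hT'
    rwa [← density_swap M, ← density_swap M Sstar Tstar] at h
  refine ⟨hrow, hcol, Real.le_sqrt_of_sq_le ?_⟩
  have hE0 : 0 ≤ E := hE ▸ Finset.sum_nonneg fun s _ => Finset.sum_nonneg fun t _ => hM s t
  have hτS' := hτS ▸ div_two_mul_le_peelingThreshold hE0 hS.card_pos
  have hτT' := hτT ▸ div_two_mul_le_peelingThreshold hE0 hT.card_pos
  calc (density M Sstar Tstar / 2) ^ 2 = E / (2 * Sstar.card) * (E / (2 * Tstar.card)) := by
        rw [div_pow, density_sq, ← hE]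
        ring
    _ ≤ τS * τT :=
        mul_le_mul hτS' hτT' (by positivity) ((by positivity : (0 : ℝ) ≤ _).trans hτS')

theorem stmt_17 {I J : Type*} [Fintype I] [Fintype J] (M : I → J → ℝ)
    (hM : ∀ i j, 0 ≤ M i j)
    (Sstar : Finset I) (Tstar : Finset J)
    (hS : Sstar.Nonempty) (hT : Tstar.Nonempty)
    (hopt : ∀ (S : Finset I) (T : Finset J), S.Nonempty → T.Nonempty →
      density M S T ≤ density M Sstar Tstar)
    (E τS τT : ℝ)
    (hE : E = ∑ s ∈ Sstar, ∑ t ∈ Tstar, M s t)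
    (hτS : τS = E * (1 - Real.sqrt (1 - 1 / (Sstar.card : ℝ))))
    (hτT : τT = E * (1 - Real.sqrt (1 - 1 / (Tstar.card : ℝ)))) :
    (∀ u ∈ Sstar, (∑ t ∈ Tstar, M u t) ≥ τS) ∧
    (∀ v ∈ Tstar, (∑ s ∈ Sstar, M s v) ≥ τT) ∧
    Real.sqrt (τS * τT) ≥ density M Sstar Tstar / 2 :=
  stmt_17_general M hM Sstar Tstar hS hT hopt E τS τT hE hτS hτT
end
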